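/- For every p with 1 < p < 2 and all matrices E, F ∈ ℝ^{d×d}, one has (p-1) |E - F|^2 ≤ [(|E|^{p-2} E - |F|^{p-2} F) : (E - F)] · (|E|^p + |F|^p)^{(2-p)/p}, where |·| is the Frobenius norm. -/
import Mathlib

open Finset

noncomputable def frobNorm {d : ℕ} (E : Matrix (Fin d) (Fin d) ℝ) : ℝ :=
  Real.sqrt (∑ i, ∑ j, (E i j) ^ 2)

noncomputable def frobInner {d : ℕ} (A B : Matrix (Fin d) (Fin d) ℝ) : ℝ :=
  ∑ i, ∑ j, A i j * B i j

/-- `|E|^{p-2} E`, interpreted as `0` when `E = 0`. -/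
noncomputable def plawMap {d : ℕ} (p : ℝ) (E : Matrix (Fin d) (Fin d) ℝ) :
    Matrix (Fin d) (Fin d) ℝ :=
  if E = 0 then 0 else (frobNorm E) ^ (p - 2) • E

section Scalar

private lemma pow_id1 {p a : ℝ} (hp1 : 1 < p) (hp2 : p < 2) (ha : 0 ≤ a) :
    a ^ (p - 2) * a ^ (2:ℕ) = a ^ p := by
  rcases eq_or_lt_of_le ha with h | h
  · rw [← h, Real.zero_rpow (by linarith), Real.zero_rpow (by linarith)]; ring
  · rw [← Real.rpow_natCast a 2, ← Real.rpow_add h]; norm_num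

private lemma pow_id2 {p a : ℝ} (hp1 : 1 < p) (hp2 : p < 2) (ha : 0 ≤ a) :
    a * a ^ (p - 2) = a ^ (p - 1) := by
  rcases eq_or_lt_of_le ha with h | h
  · rw [← h, Real.zero_rpow (by linarith), Real.zero_rpow (by linarith)]; ring
  · rw [show p - 1 = 1 + (p - 2) by ring, Real.rpow_add h, Real.rpow_one]

private lemma pow_id3 {p a : ℝ} (h : 0 < a) : a ^ (p - 1) * a ^ (2 - p) = a := by
  rw [← Real.rpow_add h]; norm_num

private lemma M_ge {p a b : ℝ} (hp1 : 1 < p) (hp2 : p < 2) (ha : 0 ≤ a) (hb : 0 ≤ b) :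
    a ^ (2 - p) ≤ (a ^ p + b ^ p) ^ ((2 - p) / p) := by
  have hap : (0:ℝ) ≤ a ^ p := Real.rpow_nonneg ha p
  have hbp : (0:ℝ) ≤ b ^ p := Real.rpow_nonneg hb p
  have h1 : a ^ (2 - p) = (a ^ p) ^ ((2 - p) / p) := by
    rw [← Real.rpow_mul ha]
    congr 1
    field_simp
  rw [h1]
  exact Real.rpow_le_rpow hap (by linarith) (div_nonneg (by linarith) (by linarith))

private lemma bern {p a b : ℝ} (hp1 : 1 < p) (hp2 : p < 2) (ha : 0 ≤ a) (hb : 0 ≤ b) :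
    b ^ (p - 1) * a ^ (2 - p) ≤ (p - 1) * b + (2 - p) * a := by
  have := Real.geom_mean_le_arith_mean2_weighted (w₁ := p - 1) (w₂ := 2 - p)
    (p₁ := b) (p₂ := a) (by linarith) (by linarith) hb ha (by ring)
  linarith

private lemma blow {p a b : ℝ} (hp1 : 1 < p) (hp2 : p < 2) (hb : 0 ≤ b) (hba : b ≤ a) :
    b ≤ b ^ (p - 1) * a ^ (2 - p) := by
  rcases eq_or_lt_of_le hb with h | h
  · rw [← h, Real.zero_rpow (by linarith)]; simp
  · calc b = b ^ (p-1) * b ^ (2-p) := (pow_id3 h).symm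
      _ ≤ b ^ (p-1) * a ^ (2-p) :=
        mul_le_mul_of_nonneg_left (Real.rpow_le_rpow hb hba (by linarith))
          (Real.rpow_nonneg hb _)

private lemma endpoint_plus {p a b : ℝ} (hp1 : 1 < p) (hp2 : p < 2) (hb : 0 ≤ b) (hba : b ≤ a) :
    (p - 1) * (a + b) ^ (2:ℕ) ≤
      (a ^ (p-1) + b ^ (p-1)) * (a + b) * ((a ^ p + b ^ p) ^ ((2 - p) / p)) := by
  have ha : 0 ≤ a := hb.trans hba
  rcases eq_or_lt_of_le ha with h | h
  · have hb0 : b = 0 := le_antisymm (hba.trans h.symm.le) hb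
    rw [← h, hb0]
    simp [Real.zero_rpow (show p - 1 ≠ 0 by intro hh; linarith)]
  · have hM := M_ge hp1 hp2 ha hb
    have h1 : a ≤ a ^ (p-1) * ((a ^ p + b ^ p) ^ ((2 - p) / p)) := by
      calc a = a ^ (p-1) * a ^ (2-p) := (pow_id3 h).symm
        _ ≤ _ := mul_le_mul_of_nonneg_left hM (Real.rpow_nonneg ha _)
    have h2 : b ≤ b ^ (p-1) * ((a ^ p + b ^ p) ^ ((2 - p) / p)) := by
      calc b ≤ b ^ (p-1) * a ^ (2-p) := blow hp1 hp2 hb hba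
        _ ≤ _ := mul_le_mul_of_nonneg_left hM (Real.rpow_nonneg hb _)
    nlinarith [sq_nonneg (a + b)]

private lemma endpoint_minus {p a b : ℝ} (hp1 : 1 < p) (hp2 : p < 2) (hb : 0 ≤ b) (hba : b ≤ a) :
    (p - 1) * (a - b) ^ (2:ℕ) ≤
      (a ^ (p-1) - b ^ (p-1)) * (a - b) * ((a ^ p + b ^ p) ^ ((2 - p) / p)) := by
  have ha : 0 ≤ a := hb.trans hba
  rcases eq_or_lt_of_le ha with h | h
  · have hb0 : b = 0 := le_antisymm (hba.trans h.symm.le) hb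
    rw [← h, hb0]; simp
  · have hM := M_ge hp1 hp2 ha hb
    have hfac : 0 ≤ a ^ (p-1) - b ^ (p-1) :=
      sub_nonneg.2 (Real.rpow_le_rpow hb hba (by linarith))
    have key : (p - 1) * (a - b) ≤ (a ^ (p-1) - b ^ (p-1)) * a ^ (2-p) := by
      have hB := bern hp1 hp2 ha hb
      have := pow_id3 (p := p) h
      nlinarith
    have key2 : (a ^ (p-1) - b ^ (p-1)) * a ^ (2-p)
        ≤ (a ^ (p-1) - b ^ (p-1)) * ((a ^ p + b ^ p) ^ ((2 - p) / p)) :=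
      mul_le_mul_of_nonneg_left hM hfac
    nlinarith [sub_nonneg.2 hba]

private lemma scalar_aux {p a b s : ℝ} (hp1 : 1 < p) (hp2 : p < 2) (hb : 0 ≤ b) (hba : b ≤ a)
    (hs1 : s ≤ a * b) (hs2 : -(a * b) ≤ s) :
    (p - 1) * (a ^ (2:ℕ) - 2 * s + b ^ (2:ℕ)) ≤
      (a ^ (p-2) * a ^ (2:ℕ) - (a ^ (p-2) + b ^ (p-2)) * s + b ^ (p-2) * b ^ (2:ℕ)) *
        ((a ^ p + b ^ p) ^ ((2 - p) / p)) := by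
  have ha : 0 ≤ a := hb.trans hba
  have e1 := pow_id1 hp1 hp2 ha
  have e2 := pow_id1 hp1 hp2 hb
  have f1 := pow_id2 hp1 hp2 ha
  have f2 := pow_id2 hp1 hp2 hb
  set M := (a ^ p + b ^ p) ^ ((2 - p) / p) with hM
  set T := a ^ (p-2) + b ^ (p-2) with hT
  have hgoal : (a ^ (p-2) * a ^ (2:ℕ) - T * s + b ^ (p-2) * b ^ (2:ℕ)) * M
      = (a ^ p + b ^ p - T * s) * M := by rw [e1, e2]; ring
  rw [hgoal]
  rcases le_total (T * M) (2 * (p - 1)) with hC | hC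
  · have hprod : -(a*b) * (2*(p-1) - T*M) ≤ s * (2*(p-1) - T*M) :=
      mul_le_mul_of_nonneg_right hs2 (by linarith)
    have hid : a ^ p + b ^ p + a*b*T = (a ^ (p-1) + b ^ (p-1)) * (a + b) := by
      rw [hT]; linear_combination (-1)*e1 - e2 + (a+b)*f1 + (a+b)*f2
    have K : (p - 1) * (a + b) ^ (2:ℕ) ≤ (a ^ p + b ^ p + a*b*T) * M := by
      rw [hid]; exact endpoint_plus hp1 hp2 hb hba
    nlinarith [K, hprod]
  · have hprod : s * (T*M - 2*(p-1)) ≤ a*b * (T*M - 2*(p-1)) :=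
      mul_le_mul_of_nonneg_right hs1 (by linarith)
    have hid : a ^ p + b ^ p - a*b*T = (a ^ (p-1) - b ^ (p-1)) * (a - b) := by
      rw [hT]; linear_combination (-1)*e1 - e2 + (a-b)*f1 - (a-b)*f2
    have K : (p - 1) * (a - b) ^ (2:ℕ) ≤ (a ^ p + b ^ p - a*b*T) * M := by
      rw [hid]; exact endpoint_minus hp1 hp2 hb hba
    nlinarith [K, hprod]

private lemma scalar_main {p a b s : ℝ} (hp1 : 1 < p) (hp2 : p < 2) (ha : 0 ≤ a) (hb : 0 ≤ b)
    (hs1 : s ≤ a * b) (hs2 : -(a * b) ≤ s) :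
    (p - 1) * (a ^ (2:ℕ) - 2 * s + b ^ (2:ℕ)) ≤
      (a ^ (p-2) * a ^ (2:ℕ) - (a ^ (p-2) + b ^ (p-2)) * s + b ^ (p-2) * b ^ (2:ℕ)) *
        ((a ^ p + b ^ p) ^ ((2 - p) / p)) := by
  rcases le_total b a with h | h
  · exact scalar_aux hp1 hp2 hb h hs1 hs2
  · have hs1' : s ≤ b * a := by rw [mul_comm b a]; exact hs1
    have hs2' : -(b * a) ≤ s := by rw [mul_comm b a]; exact hs2
    have := scalar_aux hp1 hp2 ha h hs1' hs2'
    calc (p - 1) * (a ^ (2:ℕ) - 2 * s + b ^ (2:ℕ))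
        = (p - 1) * (b ^ (2:ℕ) - 2 * s + a ^ (2:ℕ)) := by ring
      _ ≤ (b ^ (p-2) * b ^ (2:ℕ) - (b ^ (p-2) + a ^ (p-2)) * s + a ^ (p-2) * a ^ (2:ℕ)) *
            ((b ^ p + a ^ p) ^ ((2 - p) / p)) := this
      _ = _ := by rw [add_comm (b^p) (a^p)]; ring

end Scalar

section MatrixFacts

variable {d : ℕ}

private lemma sum_comb {ι : Type*} (t : Finset ι) (F f g h : ι → ℝ) (c c' c'' : ℝ)
    (H : ∀ i ∈ t, F i = c * f i + c' * g i + c'' * h i) :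
    ∑ i ∈ t, F i = c * ∑ i ∈ t, f i + c' * ∑ i ∈ t, g i + c'' * ∑ i ∈ t, h i := by
  rw [Finset.sum_congr rfl H, Finset.sum_add_distrib, Finset.sum_add_distrib,
    ← Finset.mul_sum, ← Finset.mul_sum, ← Finset.mul_sum]

private lemma frobNorm_nonneg (E : Matrix (Fin d) (Fin d) ℝ) : 0 ≤ frobNorm E :=
  Real.sqrt_nonneg _

private lemma frob_sq (E : Matrix (Fin d) (Fin d) ℝ) :
    frobNorm E ^ (2:ℕ) = ∑ i, ∑ j, (E i j) ^ 2 := by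
  rw [frobNorm, Real.sq_sqrt (by positivity)]

private lemma plawMap_eq (p : ℝ) (_hp : p < 2) (E : Matrix (Fin d) (Fin d) ℝ) :
    plawMap p E = (frobNorm E) ^ (p - 2) • E := by
  rw [plawMap]
  split_ifs with h
  · rw [h, smul_zero]
  · rfl

private lemma inner_expand (c c' : ℝ) (E F : Matrix (Fin d) (Fin d) ℝ) :
    frobInner (c • E - c' • F) (E - F) =
      c * (∑ i, ∑ j, (E i j) ^ 2) + (-(c + c')) * (frobInner E F)
        + c' * (∑ i, ∑ j, (F i j) ^ 2) := by
  rw [frobInner, frobInner]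
  apply sum_comb
  intro i _
  apply sum_comb
  intro j _
  simp only [Matrix.sub_apply, Matrix.smul_apply, smul_eq_mul]
  ring

private lemma sub_sq_expand (E F : Matrix (Fin d) (Fin d) ℝ) :
    frobNorm (E - F) ^ (2:ℕ) =
      (∑ i, ∑ j, (E i j) ^ 2) - 2 * (frobInner E F) + (∑ i, ∑ j, (F i j) ^ 2) := by
  rw [frob_sq, frobInner]
  have : (∑ i, ∑ j, ((E - F) i j) ^ 2)
      = 1 * (∑ i, ∑ j, (E i j) ^ 2) + (-2) * (∑ i, ∑ j, E i j * F i j)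
        + 1 * (∑ i, ∑ j, (F i j) ^ 2) := by
    apply sum_comb
    intro i _
    apply sum_comb
    intro j _
    simp only [Matrix.sub_apply]
    ring
  rw [this]; ring

private lemma cs_upper (E F : Matrix (Fin d) (Fin d) ℝ) :
    frobInner E F ≤ frobNorm E * frobNorm F := by
  rw [frobInner, frobNorm, frobNorm]
  have h := Real.sum_mul_le_sqrt_mul_sqrt Finset.univ
    (fun x : Fin d × Fin d => E x.1 x.2) (fun x : Fin d × Fin d => F x.1 x.2)
  simpa [Fintype.sum_prod_type] using h

private lemma cs_lower (E F : Matrix (Fin d) (Fin d) ℝ) :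
    -(frobNorm E * frobNorm F) ≤ frobInner E F := by
  have h := cs_upper (-E) F
  have h1 : frobInner (-E) F = -(frobInner E F) := by
    simp [frobInner, Finset.sum_neg_distrib]
  have h2 : frobNorm (-E) = frobNorm E := by
    simp [frobNorm]
  rw [h1, h2] at h
  linarith

end MatrixFacts

theorem stmt1 {d : ℕ} (p : ℝ) (hp1 : 1 < p) (hp2 : p < 2) (E F : Matrix (Fin d) (Fin d) ℝ) :
    (p - 1) * (frobNorm (E - F)) ^ (2 : ℝ) ≤
      frobInner (plawMap p E - plawMap p F) (E - F) *
        ((frobNorm E) ^ p + (frobNorm F) ^ p) ^ ((2 - p) / p) := by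
  have ha : 0 ≤ frobNorm E := frobNorm_nonneg E
  have hb : 0 ≤ frobNorm F := frobNorm_nonneg F
  have hsq : frobNorm E ^ (2:ℕ) = ∑ i, ∑ j, (E i j) ^ 2 := frob_sq E
  have hsq' : frobNorm F ^ (2:ℕ) = ∑ i, ∑ j, (F i j) ^ 2 := frob_sq F
  have hrw : (frobNorm (E - F)) ^ (2:ℝ) = (frobNorm (E - F)) ^ (2:ℕ) := by
    rw [show ((2:ℝ)) = ((2:ℕ):ℝ) by norm_num, Real.rpow_natCast]
  rw [hrw, plawMap_eq p hp2 E, plawMap_eq p hp2 F, sub_sq_expand, inner_expand,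
    ← hsq, ← hsq']
  have := scalar_main (a := frobNorm E) (b := frobNorm F) (s := frobInner E F)
    hp1 hp2 ha hb (cs_upper E F) (cs_lower E F)
  calc (p - 1) * (frobNorm E ^ (2:ℕ) - 2 * frobInner E F + frobNorm F ^ (2:ℕ))
      ≤ (frobNorm E ^ (p-2) * frobNorm E ^ (2:ℕ)
          - (frobNorm E ^ (p-2) + frobNorm F ^ (p-2)) * frobInner E F
          + frobNorm F ^ (p-2) * frobNorm F ^ (2:ℕ)) *
        ((frobNorm E ^ p + frobNorm F ^ p) ^ ((2 - p) / p)) := this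
    _ = _ := by ring
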